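/- Let P be a polymatroid over [n] with rank function f, let t ∈ [n], and let j be an integer with α_t ≤ j ≤ β_t, where α_t = f([n]) − f([n]∖{t}) and β_t = f({t}). Let f^t_j be the rank function of the polymatroid P̂^t_j over [n]∖{t}. Then for every subset I ⊆ [n]∖{t}, f^t_j(I) = min{f(I), f(I∪{t}) − j}. In particular, f^t_{α_t}(I) = f(I) and f^t_{β_t}(I) = f(I∪{t}) − f({t}). -/

import Mathlib

open scoped BigOperators

/-- A polymatroid (set of integer bases) over the ground set `E` inside the ambient
index type `ι`: a nonempty finite set of integer vectors supported on `E`, all with the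
same coordinate sum, satisfying the exchange axiom. -/
def IsPolymatroidOn {ι : Type} [DecidableEq ι] (E : Finset ι) (P : Set (ι → ℤ)) : Prop :=
  P.Nonempty ∧ P.Finite ∧
  (∀ a ∈ P, ∀ i, i ∉ E → a i = 0) ∧
  (∀ a ∈ P, ∀ b ∈ P, (∑ i ∈ E, a i) = ∑ i ∈ E, b i) ∧
  (∀ a ∈ P, ∀ b ∈ P, ∀ i, b i < a i →
    ∃ j, a j < b j ∧ (a - Pi.single i 1 + Pi.single j 1) ∈ P ∧
      (b + Pi.single i 1 - Pi.single j 1) ∈ P)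

/-- The rank function `f_P(I) = max_{a ∈ P} ∑_{i ∈ I} a i`. -/
noncomputable def rankFn {ι : Type} (P : Set (ι → ℤ)) (I : Finset ι) : ℤ :=
  sSup ((fun a => ∑ i ∈ I, a i) '' P)

/-- `i ∈ E` is internally active for `a` with respect to `P`:
`a - e i + e j ∉ P` for all `j < i` in the ground set. -/
def IntActive {ι : Type} [LinearOrder ι] (E : Finset ι) (P : Set (ι → ℤ))
    (a : ι → ℤ) (i : ι) : Prop :=
  i ∈ E ∧ ∀ j ∈ E, j < i → (a - Pi.single i 1 + Pi.single j 1) ∉ P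

/-- `i ∈ E` is externally active for `a` with respect to `P`:
`a + e i - e j ∉ P` for all `j < i` in the ground set. -/
def ExtActive {ι : Type} [LinearOrder ι] (E : Finset ι) (P : Set (ι → ℤ))
    (a : ι → ℤ) (i : ι) : Prop :=
  i ∈ E ∧ ∀ j ∈ E, j < i → (a + Pi.single i 1 - Pi.single j 1) ∉ P

/-- The polymatroid Tutte polynomial `𝒯_P(x,y)` as a polynomial in `ℤ[x,y]`,
with `x = X 0`, `y = X 1`. -/
noncomputable def tuttePoly {ι : Type} [LinearOrder ι] (E : Finset ι) (P : Set (ι → ℤ)) :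
    MvPolynomial (Fin 2) ℤ :=
  ∑ᶠ a ∈ P,
    MvPolynomial.X 0 ^ ({i | IntActive E P a i} \ {i | ExtActive E P a i}).ncard *
      MvPolynomial.X 1 ^ ({i | ExtActive E P a i} \ {i | IntActive E P a i}).ncard *
      (MvPolynomial.X 0 + MvPolynomial.X 1 - 1) ^
        ({i | IntActive E P a i} ∩ {i | ExtActive E P a i}).ncard

/-- The interior polynomial `I_P(x) = ∑_{a ∈ P} x^{|E| - |Int(a)|}`. -/
noncomputable def interiorPoly {ι : Type} [LinearOrder ι] (E : Finset ι) (P : Set (ι → ℤ)) :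
    Polynomial ℤ :=
  ∑ᶠ a ∈ P, Polynomial.X ^ (E.card - {i | IntActive E P a i}.ncard)

/-- The exterior polynomial `X_P(y) = ∑_{a ∈ P} y^{|E| - |Ext(a)|}`. -/
noncomputable def exteriorPoly {ι : Type} [LinearOrder ι] (E : Finset ι) (P : Set (ι → ℤ)) :
    Polynomial ℤ :=
  ∑ᶠ a ∈ P, Polynomial.X ^ (E.card - {i | ExtActive E P a i}.ncard)

/-- The slice `P^t_j = {a ∈ P | a t = j}`. -/
def sliceAt {ι : Type} (P : Set (ι → ℤ)) (t : ι) (j : ℤ) : Set (ι → ℤ) :=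
  {a ∈ P | a t = j}

/-- The projection `P̂^t_j` of the slice `P^t_j` under deleting the `t`-th coordinate
(encoded by setting the `t`-th coordinate to `0`). -/
def projAt {ι : Type} [DecidableEq ι] (P : Set (ι → ℤ)) (t : ι) (j : ℤ) : Set (ι → ℤ) :=
  (fun a => Function.update a t 0) '' sliceAt P t j

/-- The set of integer points associated to a rank function `g` on the ground set `E`:
`{a | ∑_{i ∈ I} a i ≤ g I for all I ⊆ E, ∑_{i ∈ E} a i = g E}` (supported on `E`). -/
def polymatroidOfRank {ι : Type} (E : Finset ι) (g : Finset ι → ℤ) : Set (ι → ℤ) :=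
  {a | (∀ i, i ∉ E → a i = 0) ∧ (∀ I ⊆ E, (∑ i ∈ I, a i) ≤ g I) ∧ (∑ i ∈ E, a i) = g E}

/-- The deletion `P ∖ A`: the polymatroid on `E ∖ A` with rank function `T ↦ f_P(T)`. -/
noncomputable def deletion {ι : Type} [DecidableEq ι] (E : Finset ι) (P : Set (ι → ℤ))
    (A : Finset ι) : Set (ι → ℤ) :=
  polymatroidOfRank (E \ A) fun T => rankFn P T

/-- The contraction `P / A`: the polymatroid on `E ∖ A` with rank function
`T ↦ f_P(T ∪ A) - f_P(A)`. -/
noncomputable def contraction {ι : Type} [DecidableEq ι] (E : Finset ι) (P : Set (ι → ℤ))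
    (A : Finset ι) : Set (ι → ℤ) :=
  polymatroidOfRank (E \ A) fun T => rankFn P (T ∪ A) - rankFn P A

/-- The bipartite graph `Bip H` of the hypergraph whose hyperedges are indexed by `ε`
with vertex sets given by `m`: color classes `V` and `ε`, with `v` adjacent to `e`
iff `v ∈ m e`. -/
def bipGraph {V ε : Type} (m : ε → Finset V) : SimpleGraph (V ⊕ ε) :=
  SimpleGraph.fromRel fun a b => ∃ v e, a = Sum.inl v ∧ b = Sum.inr e ∧ v ∈ m e

/-- The vertex set of `Bip H|_{E'}`: the hyperedges in `E'` together with all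
vertices incident with them. -/
def bipVerts {V ε : Type} (m : ε → Finset V) (E' : Finset ε) : Set (V ⊕ ε) :=
  {x | (∃ e ∈ E', x = Sum.inr e) ∨ ∃ v, x = Sum.inl v ∧ ∃ e ∈ E', v ∈ m e}

/-- `μ(E') = |⋃ E'| - c(E')` for `E' ≠ ∅`, and `μ(∅) = 0`, where `c(E')` is the number
of connected components of `Bip H|_{E'}`. -/
noncomputable def muFn {V ε : Type} [DecidableEq V] [DecidableEq ε] (m : ε → Finset V) (E' : Finset ε) : ℤ :=
  if E' = ∅ then 0
  else ((E'.biUnion m).card : ℤ) -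
    (Nat.card ((bipGraph m).induce (bipVerts m E')).ConnectedComponent : ℤ)

/-!
Every `a ∈ P^t_j` satisfies `∑_I a ≤ f(I)` and `∑_I a = ∑_{I ∪ {t}} a - j ≤ f(I ∪ {t}) - j`, so
the content is that the minimum is attained. By the exchange axiom there is a basis `a₀` maximal
on both `I` and `I ∪ {t}`, so `a₀ t = f(I ∪ {t}) - f(I)`. Exchanging `a` against a basis maximal
on `E ∖ {t}` (whose `t`-coordinate is `α_t`) lowers `a t` by one and keeps `a` maximal on `I`;
exchanging against a basis with `t`-coordinate `β_t` raises `a t` by one and keeps `a` maximal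
on `I ∪ {t}`. Sliding `a₀ t` to `j` in this way yields a basis of `P^t_j` attaining the minimum.
The two special cases follow from `f(I) + α_t ≤ f(I ∪ {t}) ≤ f(I) + β_t`.
-/

section IntegerInterval

variable {α : Type*} {Q : α → Prop} (v : α → ℤ)

theorem exists_apply_eq_of_step_down {lo : ℤ}
    (step : ∀ a, Q a → lo < v a → ∃ b, Q b ∧ v b = v a - 1) {a : α} (ha : Q a) {j : ℤ}
    (hlo : lo ≤ j) (hj : j ≤ v a) : ∃ b, Q b ∧ v b = j := by
  induction j, hj using Int.leInductionDown with
  | base => exact ⟨a, ha, rfl⟩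
  | pred j _ ih =>
    obtain ⟨b, hb, rfl⟩ := ih (by omega)
    exact step b hb (by omega)

theorem exists_apply_eq_of_step_up {hi : ℤ}
    (step : ∀ a, Q a → v a < hi → ∃ b, Q b ∧ v b = v a + 1) {a : α} (ha : Q a) {j : ℤ}
    (hj : v a ≤ j) (hhi : j ≤ hi) : ∃ b, Q b ∧ v b = j := by
  induction j, hj using Int.leInduction with
  | base => exact ⟨a, ha, rfl⟩
  | succ j _ ih =>
    obtain ⟨b, hb, rfl⟩ := ih (by omega)
    exact step b hb (by omega)

end IntegerInterval

section RankFn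

variable {ι : Type} {P : Set (ι → ℤ)}

theorem sum_le_rankFn (hfin : P.Finite) {a : ι → ℤ} (ha : a ∈ P) (I : Finset ι) :
    ∑ i ∈ I, a i ≤ rankFn P I :=
  le_csSup (hfin.image _).bddAbove ⟨a, ha, rfl⟩

theorem exists_sum_eq_rankFn (hfin : P.Finite) (hne : P.Nonempty) (I : Finset ι) :
    ∃ a ∈ P, ∑ i ∈ I, a i = rankFn P I :=
  (hne.image _).csSup_mem (hfin.image _)

theorem rankFn_eq_of_isGreatest {I : Finset ι} {m : ℤ} {a : ι → ℤ} (ha : a ∈ P)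
    (ham : ∑ i ∈ I, a i = m) (hle : ∀ b ∈ P, ∑ i ∈ I, b i ≤ m) : rankFn P I = m :=
  IsGreatest.csSup_eq ⟨⟨a, ha, ham⟩, by rintro _ ⟨b, hb, rfl⟩; exact hle b hb⟩

theorem rankFn_projAt [DecidableEq ι] {t : ι} {I : Finset ι} (htI : t ∉ I) (j : ℤ) :
    rankFn (projAt P t j) I = rankFn (sliceAt P t j) I := by
  unfold rankFn projAt
  rw [Set.image_image]
  refine congrArg sSup (Set.image_congr fun a _ => Finset.sum_congr rfl fun i hi => ?_)
  exact Function.update_of_ne (ne_of_mem_of_not_mem hi htI) _ _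

theorem rankFn_insert_le [DecidableEq ι] (hfin : P.Finite) (hne : P.Nonempty) {t : ι}
    {I : Finset ι} (htI : t ∉ I) : rankFn P (insert t I) ≤ rankFn P {t} + rankFn P I := by
  obtain ⟨a, ha, haJ⟩ := exists_sum_eq_rankFn hfin hne (insert t I)
  rw [← haJ, Finset.sum_insert htI]
  have := sum_le_rankFn hfin ha {t}
  rw [Finset.sum_singleton] at this
  linarith [sum_le_rankFn hfin ha I]

theorem sum_sub_single_add_single [DecidableEq ι] (S : Finset ι) (a : ι → ℤ) (i k : ι) :
    ∑ l ∈ S, (a - Pi.single i 1 + Pi.single k 1 : ι → ℤ) l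
      = ∑ l ∈ S, a l - (if i ∈ S then 1 else 0) + (if k ∈ S then 1 else 0) := by
  simp only [Pi.add_apply, Pi.sub_apply, Finset.sum_add_distrib, Finset.sum_sub_distrib,
    Finset.sum_pi_single']

end RankFn

namespace IsPolymatroidOn

variable {ι : Type} [DecidableEq ι] {E : Finset ι} {P : Set (ι → ℤ)}

theorem exchange (hP : IsPolymatroidOn E P) {a b : ι → ℤ} (ha : a ∈ P) (hb : b ∈ P) {i : ι}
    (hi : b i < a i) : ∃ k, a k < b k ∧ a - Pi.single i 1 + Pi.single k 1 ∈ P ∧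
      b - Pi.single k 1 + Pi.single i 1 ∈ P := by
  simpa only [sub_add_eq_add_sub] using hP.2.2.2.2 a ha b hb i hi

theorem sum_eq_rankFn_ground (hP : IsPolymatroidOn E P) {a : ι → ℤ} (ha : a ∈ P) :
    ∑ i ∈ E, a i = rankFn P E := by
  obtain ⟨b, hb, hbE⟩ := exists_sum_eq_rankFn hP.2.1 hP.1 E
  exact hbE ▸ hP.2.2.2.1 a ha b hb

theorem apply_eq_rankFn_sub_rankFn_erase (hP : IsPolymatroidOn E P) {t : ι} (ht : t ∈ E)
    {a : ι → ℤ} (ha : a ∈ P) (haE : ∑ i ∈ E.erase t, a i = rankFn P (E.erase t)) :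
    a t = rankFn P E - rankFn P (E.erase t) := by
  have := Finset.sum_erase_add E a ht
  have := hP.sum_eq_rankFn_ground ha
  omega

theorem exists_sum_eq_rankFn_of_subset (hP : IsPolymatroidOn E P) {I J : Finset ι}
    (hIJ : I ⊆ J) : ∃ a ∈ P, ∑ i ∈ I, a i = rankFn P I ∧ ∑ i ∈ J, a i = rankFn P J := by
  obtain ⟨a, ⟨haP, haJ⟩, hamax⟩ := Set.exists_max_image {a | a ∈ P ∧ ∑ i ∈ J, a i = rankFn P J}
    (fun a => ∑ i ∈ I, a i) (hP.2.1.subset fun _ h => h.1)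
    (exists_sum_eq_rankFn hP.2.1 hP.1 J)
  obtain ⟨b, ⟨hbP, hbI⟩, hbmin⟩ := Set.exists_min_image {b | b ∈ P ∧ ∑ i ∈ I, b i = rankFn P I}
    (fun b => ∑ l ∈ I, (b l - a l).toNat) (hP.2.1.subset fun _ h => h.1)
    (exists_sum_eq_rankFn hP.2.1 hP.1 I)
  -- `a` is maximal on `J` with the largest sum on `I`, and `b` is maximal on `I` and closest
  -- to `a`; an exchange between them would contradict one of these two choices.
  refine ⟨a, haP, ?_, haJ⟩
  by_contra haI
  have hlt : ∑ i ∈ I, a i < ∑ i ∈ I, b i := hbI ▸ (sum_le_rankFn hP.2.1 haP I).lt_of_ne haI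
  obtain ⟨i, hiI, hi⟩ := Finset.exists_lt_of_sum_lt hlt
  obtain ⟨k, hk, hb', ha'⟩ := hP.exchange hbP haP hi
  have hik : i ≠ k := by rintro rfl; omega
  by_cases hkI : k ∈ I
  · have hb'I : ∑ l ∈ I, (b - Pi.single i 1 + Pi.single k 1 : ι → ℤ) l = rankFn P I := by
      rw [sum_sub_single_add_single, if_pos hiI, if_pos hkI, hbI]; ring
    have hcloser : ∑ l ∈ I, ((b - Pi.single i 1 + Pi.single k 1 : ι → ℤ) l - a l).toNat
        < ∑ l ∈ I, (b l - a l).toNat := by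
      have hbi : (b - Pi.single i 1 + Pi.single k 1 : ι → ℤ) i = b i - 1 := by simp [hik]
      refine Finset.sum_lt_sum (fun l _ => ?_) ⟨i, hiI, by omega⟩
      rcases eq_or_ne l i with rfl | hli
      · omega
      rcases eq_or_ne l k with rfl | hlk
      · simp only [Pi.add_apply, Pi.sub_apply, Pi.single_eq_of_ne hli, Pi.single_eq_same]; omega
      · simp [hli, hlk]
    exact (hbmin _ ⟨hb', hb'I⟩).not_gt hcloser
  · have ha'J := sum_le_rankFn hP.2.1 ha' J
    have ha'I := hamax _ ⟨ha', ?_⟩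
    · rw [sum_sub_single_add_single, if_pos hiI, if_neg hkI] at ha'I
      omega
    rw [sum_sub_single_add_single, if_pos (hIJ hiI), haJ] at ha'J ⊢
    split_ifs at ha'J ⊢ <;> omega

theorem exists_sub_one_of_lt (hP : IsPolymatroidOn E P) {t : ι} {I : Finset ι} (htI : t ∉ I)
    {a c : ι → ℤ} (ha : a ∈ P) (haI : ∑ i ∈ I, a i = rankFn P I) (hc : c ∈ P)
    (hlt : c t < a t) : ∃ a' ∈ P, ∑ i ∈ I, a' i = rankFn P I ∧ a' t = a t - 1 := by
  obtain ⟨k, hk, ha', -⟩ := hP.exchange ha hc hlt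
  have hkt : k ≠ t := by rintro rfl; omega
  have hle := sum_le_rankFn hP.2.1 ha' I
  rw [sum_sub_single_add_single, if_neg htI, haI] at hle
  have hkI : k ∉ I := by intro hkI; rw [if_pos hkI] at hle; omega
  refine ⟨_, ha', ?_, by simp [hkt.symm]⟩
  rw [sum_sub_single_add_single, if_neg htI, if_neg hkI, haI]; ring

theorem exists_add_one_of_lt (hP : IsPolymatroidOn E P) {t : ι} {J : Finset ι} (htJ : t ∈ J)
    {a c : ι → ℤ} (ha : a ∈ P) (haJ : ∑ i ∈ J, a i = rankFn P J) (hc : c ∈ P)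
    (hlt : a t < c t) : ∃ a' ∈ P, ∑ i ∈ J, a' i = rankFn P J ∧ a' t = a t + 1 := by
  obtain ⟨k, hk, -, ha'⟩ := hP.exchange hc ha hlt
  have hkt : k ≠ t := by rintro rfl; omega
  have hle := sum_le_rankFn hP.2.1 ha' J
  rw [sum_sub_single_add_single, if_pos htJ, haJ] at hle
  have hkJ : k ∈ J := by by_contra hkJ; rw [if_neg hkJ] at hle; omega
  refine ⟨_, ha', ?_, by simp [hkt]⟩
  rw [sum_sub_single_add_single, if_pos htJ, if_pos hkJ, haJ]; ring

theorem exists_mem_sliceAt_sum_eq_min (hP : IsPolymatroidOn E P) {t : ι} (ht : t ∈ E) {j : ℤ}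
    (h1 : rankFn P E - rankFn P (E.erase t) ≤ j) (h2 : j ≤ rankFn P {t}) {I : Finset ι}
    (hI : I ⊆ E.erase t) :
    ∃ a ∈ sliceAt P t j, ∑ i ∈ I, a i = min (rankFn P I) (rankFn P (insert t I) - j) := by
  have htI : t ∉ I := fun h => Finset.notMem_erase t E (hI h)
  have hsum (a : ι → ℤ) : ∑ i ∈ insert t I, a i = a t + ∑ i ∈ I, a i := Finset.sum_insert htI
  obtain ⟨a₀, ha₀, ha₀I, ha₀J⟩ := hP.exists_sum_eq_rankFn_of_subset (Finset.subset_insert t I)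
  obtain ⟨cα, hcα, hcαE⟩ := exists_sum_eq_rankFn hP.2.1 hP.1 (E.erase t)
  obtain ⟨cβ, hcβ, hcβt⟩ := exists_sum_eq_rankFn hP.2.1 hP.1 {t}
  rw [← hP.apply_eq_rankFn_sub_rankFn_erase ht hcα hcαE] at h1
  rw [← hcβt, Finset.sum_singleton] at h2
  rcases le_total j (a₀ t) with hj | hj
  · obtain ⟨a, ⟨haP, haI⟩, rfl⟩ :=
      exists_apply_eq_of_step_down (Q := fun a => a ∈ P ∧ ∑ i ∈ I, a i = rankFn P I)
        (fun a => a t) (fun a ha hlt => (hP.exists_sub_one_of_lt htI ha.1 ha.2 hcα hlt).imp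
          fun a' h => ⟨⟨h.1, h.2.1⟩, h.2.2⟩) ⟨ha₀, ha₀I⟩ h1 hj
    refine ⟨a, ⟨haP, rfl⟩, ?_⟩
    have := hsum a₀
    omega
  · obtain ⟨a, ⟨haP, haJ⟩, rfl⟩ :=
      exists_apply_eq_of_step_up
        (Q := fun a => a ∈ P ∧ ∑ i ∈ insert t I, a i = rankFn P (insert t I))
        (fun a => a t) (fun a ha hlt => (hP.exists_add_one_of_lt (Finset.mem_insert_self t I)
          ha.1 ha.2 hcβ hlt).imp fun a' h => ⟨⟨h.1, h.2.1⟩, h.2.2⟩) ⟨ha₀, ha₀J⟩ hj h2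
    refine ⟨a, ⟨haP, rfl⟩, ?_⟩
    have := hsum a
    have := hsum a₀
    omega

theorem rankFn_projAt_eq_min (hP : IsPolymatroidOn E P) {t : ι} (ht : t ∈ E) {j : ℤ}
    (h1 : rankFn P E - rankFn P (E.erase t) ≤ j) (h2 : j ≤ rankFn P {t}) {I : Finset ι}
    (hI : I ⊆ E.erase t) :
    rankFn (projAt P t j) I = min (rankFn P I) (rankFn P (insert t I) - j) := by
  have htI : t ∉ I := fun h => Finset.notMem_erase t E (hI h)
  obtain ⟨a, ha, haI⟩ := hP.exists_mem_sliceAt_sum_eq_min ht h1 h2 hI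
  rw [rankFn_projAt htI]
  refine rankFn_eq_of_isGreatest ha haI ?_
  rintro b ⟨hbP, rfl⟩
  have := sum_le_rankFn hP.2.1 hbP I
  have := sum_le_rankFn hP.2.1 hbP (insert t I)
  have := Finset.sum_insert (f := b) htI
  omega

theorem rankFn_sub_rankFn_erase_le (hP : IsPolymatroidOn E P) {t : ι} (ht : t ∈ E) :
    rankFn P E - rankFn P (E.erase t) ≤ rankFn P {t} := by
  obtain ⟨c, hc, hcE⟩ := exists_sum_eq_rankFn hP.2.1 hP.1 (E.erase t)
  rw [← hP.apply_eq_rankFn_sub_rankFn_erase ht hc hcE]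
  simpa using sum_le_rankFn hP.2.1 hc {t}

theorem rankFn_add_sub_rankFn_erase_le (hP : IsPolymatroidOn E P) {t : ι} (ht : t ∈ E)
    {I : Finset ι} (hI : I ⊆ E.erase t) :
    rankFn P I + (rankFn P E - rankFn P (E.erase t)) ≤ rankFn P (insert t I) := by
  obtain ⟨a, ha, haI, haE⟩ := hP.exists_sum_eq_rankFn_of_subset hI
  rw [← hP.apply_eq_rankFn_sub_rankFn_erase ht ha haE, ← haI, add_comm,
    ← Finset.sum_insert (fun h => Finset.notMem_erase t E (hI h))]
  exact sum_le_rankFn hP.2.1 ha _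

end IsPolymatroidOn

/-- the rank function of `P̂^t_j` is `I ↦ min (f I) (f (I ∪ {t}) - j)`;
in particular it is `f` for `j = α_t` and `I ↦ f (I ∪ {t}) - f {t}` for `j = β_t`. -/
theorem statement1 {ι : Type} [LinearOrder ι] (E : Finset ι) (P : Set (ι → ℤ))
    (hP : IsPolymatroidOn E P) (t : ι) (ht : t ∈ E) (j : ℤ)
    (h1 : rankFn P E - rankFn P (E.erase t) ≤ j) (h2 : j ≤ rankFn P {t}) :
    (∀ I ⊆ E.erase t, rankFn (projAt P t j) I =
        min (rankFn P I) (rankFn P (insert t I) - j)) ∧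
    (∀ I ⊆ E.erase t,
        rankFn (projAt P t (rankFn P E - rankFn P (E.erase t))) I = rankFn P I ∧
        rankFn (projAt P t (rankFn P {t})) I = rankFn P (insert t I) - rankFn P {t}) := by
  refine ⟨fun I hI => hP.rankFn_projAt_eq_min ht h1 h2 hI, fun I hI => ?_⟩
  have hαβ := hP.rankFn_sub_rankFn_erase_le ht
  rw [hP.rankFn_projAt_eq_min ht le_rfl hαβ hI, hP.rankFn_projAt_eq_min ht hαβ le_rfl hI]
  have hα := hP.rankFn_add_sub_rankFn_erase_le ht hI
  have hβ := rankFn_insert_le hP.2.1 hP.1 (fun h => Finset.notMem_erase t E (hI h))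
  exact ⟨min_eq_left (by linarith), min_eq_right (by linarith)⟩
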